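/- Let G : U → ℝ be real-analytic on a neighbourhood U of (0,0) in ℝⁿ × ℝ, y-regular of order d > 0 at (0,0), with cᵢ(x) := (∂ⁱG/∂yⁱ)(x,0). Assume that for each i < d there is an analytic cᵢ* with cᵢ(x) = x^{α(d−i)}·cᵢ*(x), where α ∈ ℕⁿ, and that c_k*(0) ≠ 0 for some k < d. Then H(x,y) := x^{−αd}·G(x, x^α·y) extends to a real-analytic function in a neighbourhood of (0,0), y-regular of order at most k at (0,0). -/

import Mathlib

/-!
Write `w = (x, y)`. If `f` is analytic at `0` and `f (x, 0) = 0`, the power series of `f` can be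
divided by `y` term by term: with `π w = (x, 0)`, each homogeneous term telescopes as
`P (w, …, w) - P (π w, …, π w) = ∑ᵢ P (w, …, w, w - π w, π w, …, π w)` and `w - π w = y • (0, 1)`;
the quotient series has coefficients of norm at most `(m + 1) ‖p (m + 1)‖`, hence a positive
radius. Dividing `d` times gives a Taylor formula in `y` with a jointly analytic remainder,
`G (x, y) = ∑_{i<d} yⁱ / i! · cᵢ(x) + y^d R (x, y)`.

Substituting `y ↦ x^α y` and `cᵢ = x^{α(d-i)} cᵢ*`, every term becomes divisible by `x^{αd}`, and
`H (x, y) = ∑_{i<d} yⁱ / i! · cᵢ*(x) + y^d R (x, x^α y)`. Its `i`-th `y`-derivative at the origin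
is `cᵢ*(0)` for `i < d`, so the first nonvanishing one has index at most `k`.
-/

/-- The `i`-th partial derivative of `G(x,y)` with respect to `y`. -/
noncomputable def yDeriv {n : ℕ} (G : (Fin n → ℝ) × ℝ → ℝ) (i : ℕ)
    (x : Fin n → ℝ) (y : ℝ) : ℝ :=
  iteratedDeriv i (fun t => G (x, t)) y

/-- `G` is `y`-regular of order `k` at `(x₀, y₀)`. -/
def YRegular {n : ℕ} (G : (Fin n → ℝ) × ℝ → ℝ) (k : ℕ)
    (x₀ : Fin n → ℝ) (y₀ : ℝ) : Prop :=
  yDeriv G k x₀ y₀ ≠ 0 ∧ ∀ j < k, yDeriv G j x₀ y₀ = 0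

open Filter Topology Function
open scoped Nat

section Analytic

variable {𝕜 E F : Type*} [NontriviallyNormedField 𝕜]
  [NormedAddCommGroup E] [NormedSpace 𝕜 E] [NormedAddCommGroup F] [NormedSpace 𝕜 F]

variable (𝕜 E) in
noncomputable def projFst : E × 𝕜 →L[𝕜] E × 𝕜 :=
  (ContinuousLinearMap.inl 𝕜 E 𝕜).comp (ContinuousLinearMap.fst 𝕜 E 𝕜)

@[simp]
lemma projFst_apply (w : E × 𝕜) : projFst 𝕜 E w = (w.1, 0) := rfl

lemma norm_projFst_le : ‖projFst 𝕜 E‖ ≤ 1 :=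
  (ContinuousLinearMap.opNorm_comp_le _ _).trans <|
    mul_le_one₀ (ContinuousLinearMap.norm_inl_le_one _ _ _) (norm_nonneg _)
      (ContinuousLinearMap.norm_fst_le _ _ _)

namespace ContinuousMultilinearMap

variable {m : ℕ} (P : ContinuousMultilinearMap 𝕜 (fun _ : Fin (m + 1) => E × 𝕜) F)

/-- `(u₀, …, u_{m-1}) ↦ P (u₀, …, u_{i-1}, (0, 1), π u_i, …, π u_{m-1})`: on the diagonal, the
`i`-th summand of the telescoping sum divided by `w.2`. -/
noncomputable def divSndTerm (i : Fin (m + 1)) :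
    ContinuousMultilinearMap 𝕜 (fun _ : Fin m => E × 𝕜) F :=
  (P.curryMid i ((0 : E), (1 : 𝕜))).compContinuousLinearMap fun j =>
    if j.castSucc < i then ContinuousLinearMap.id 𝕜 (E × 𝕜) else projFst 𝕜 E

lemma norm_divSndTerm_le (i : Fin (m + 1)) : ‖P.divSndTerm i‖ ≤ ‖P‖ := by
  refine (norm_compContinuousLinearMap_le _ _).trans ?_
  have hcurry : ‖P.curryMid i ((0 : E), (1 : 𝕜))‖ ≤ ‖P‖ := by
    simpa using (P.curryMid i).le_opNorm ((0 : E), (1 : 𝕜))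
  refine (mul_le_of_le_one_right (norm_nonneg _)
    (Finset.prod_le_one (fun _ _ => norm_nonneg _) fun j _ => ?_)).trans hcurry
  split_ifs
  exacts [ContinuousLinearMap.norm_id_le, norm_projFst_le]

lemma divSndTerm_apply_const (i : Fin (m + 1)) (w : E × 𝕜) :
    P.divSndTerm i (fun _ => w) =
      P (update (fun j => if j < i then w else projFst 𝕜 E w) i ((0 : E), (1 : 𝕜))) := by
  simp only [divSndTerm, compContinuousLinearMap_apply, curryMid_apply]
  congr 1
  ext j : 1
  refine Fin.succAboveCases i ?_ (fun j => ?_) j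
  · simp
  · rw [Fin.insertNth_apply_succAbove, update_of_ne (Fin.succAbove_ne i j)]
    by_cases h : j.castSucc < i
    · simp [h, Fin.succAbove_of_castSucc_lt]
    · have h' : ¬ j.succ < i := fun h' => h (Fin.castSucc_lt_succ.trans h')
      simp [h, h', Fin.succAbove_of_le_castSucc _ _ (not_lt.mp h)]

lemma snd_smul_sum_divSndTerm (w : E × 𝕜) :
    w.2 • ∑ i, P.divSndTerm i (fun _ => w) = P (fun _ => w) - P (fun _ => projFst 𝕜 E w) := by
  have hw : w - projFst 𝕜 E w = w.2 • ((0 : E), (1 : 𝕜)) := by ext <;> simp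
  have htelescope := P.toMultilinearMap.map_sub_map_piecewise (fun _ => w)
    (fun _ => projFst 𝕜 E w) Finset.univ
  simp only [Finset.piecewise_univ, Finset.mem_univ, true_imp_iff, coe_coe] at htelescope
  rw [Finset.smul_sum, htelescope]
  refine Finset.sum_congr rfl fun i _ => ?_
  rw [divSndTerm_apply_const, ← map_update_smul, ← hw]
  congr 1
  ext j : 1
  rcases lt_trichotomy j i with h | rfl | h
  · simp [h, h.ne]
  · simp
  · simp [h.ne, h.ne', not_lt_of_gt h]

end ContinuousMultilinearMap

namespace FormalMultilinearSeries

lemma radius_pos_of_norm_le_succ_mul {E' F' : Type*} [NormedAddCommGroup E'] [NormedSpace 𝕜 E']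
    [NormedAddCommGroup F'] [NormedSpace 𝕜 F'] {p : FormalMultilinearSeries 𝕜 E F}
    {q : FormalMultilinearSeries 𝕜 E' F'} (hp : 0 < p.radius)
    (hq : ∀ m, ‖q m‖ ≤ (m + 1) * ‖p (m + 1)‖) : 0 < q.radius := by
  obtain ⟨r, hr0, hr⟩ := ENNReal.lt_iff_exists_nnreal_btwn.mp hp
  obtain ⟨C, -, hC⟩ := p.norm_mul_pow_le_of_lt_radius hr
  have hr0' : (0 : ℝ) < r := by exact_mod_cast hr0
  refine lt_of_lt_of_le ?_ (q.le_radius_of_bound (2 * C / r) (r := r / 2) fun m => ?_)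
  · simpa using hr0.ne'
  calc ‖q m‖ * ((r / 2 : NNReal) : ℝ) ^ m ≤ (m + 1) * ‖p (m + 1)‖ * ((r : ℝ) / 2) ^ m := by
        push_cast; gcongr; exact hq m
    _ = ((m + 1) / 2 ^ m) * (‖p (m + 1)‖ * (r : ℝ) ^ (m + 1)) / r := by
        rw [div_pow, pow_succ]; field_simp
    _ ≤ 2 * C / r := by
        gcongr
        · rw [div_le_iff₀ (by positivity), ← pow_succ']
          exact_mod_cast (Nat.lt_two_pow_self (n := m + 1)).le
        · exact hC (m + 1)

variable (p : FormalMultilinearSeries 𝕜 (E × 𝕜) F)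

noncomputable def divSnd : FormalMultilinearSeries 𝕜 (E × 𝕜) F :=
  fun m => ∑ i, (p (m + 1)).divSndTerm i

lemma norm_divSnd_le (m : ℕ) : ‖p.divSnd m‖ ≤ (m + 1) * ‖p (m + 1)‖ :=
  (norm_sum_le _ _).trans <| by
    simpa using Finset.sum_le_sum fun i (_ : i ∈ Finset.univ) => (p (m + 1)).norm_divSndTerm_le i

lemma snd_smul_divSnd_apply_const (m : ℕ) (w : E × 𝕜) :
    w.2 • p.divSnd m (fun _ => w) =
      p (m + 1) (fun _ => w) - p (m + 1) (fun _ => projFst 𝕜 E w) := by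
  rw [divSnd, sum_apply, ContinuousMultilinearMap.snd_smul_sum_divSndTerm]

end FormalMultilinearSeries

lemma iteratedDeriv_sum_pow_div_factorial_smul [CharZero 𝕜] (c : ℕ → F) {i d : ℕ}
    (hi : i < d) :
    iteratedDeriv i (fun t : 𝕜 => ∑ l ∈ Finset.range d, (t ^ l / l !) • c l) 0 = c i := by
  simp (disch := fun_prop) only [iteratedDeriv_fun_sum, iteratedDeriv_smul_const,
    iteratedDeriv_div_const, iteratedDeriv_fun_pow_zero]
  simp [ite_div, Finset.sum_ite_eq_of_mem _ _ _ (Finset.mem_range.mpr hi), Nat.factorial_ne_zero]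

variable [CompleteSpace F]

theorem AnalyticAt.exists_eventuallyEq_snd_smul {f : E × 𝕜 → F} (hf : AnalyticAt 𝕜 f 0)
    (h0 : ∀ᶠ x in 𝓝 0, f (x, 0) = 0) :
    ∃ g : E × 𝕜 → F, AnalyticAt 𝕜 g 0 ∧ ∀ᶠ w in 𝓝 0, f w = w.2 • g w := by
  obtain ⟨p, hp⟩ := hf
  have hq := p.divSnd.hasFPowerSeriesOnBall
    (FormalMultilinearSeries.radius_pos_of_norm_le_succ_mul hp.radius_pos p.norm_divSnd_le)
  refine ⟨p.divSnd.sum, hq.analyticAt, ?_⟩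
  have hproj : Tendsto (projFst 𝕜 E) (𝓝 0) (𝓝 0) :=
    (projFst 𝕜 E).continuous.tendsto' 0 0 (by simp)
  filter_upwards [hp.eventually_hasSum, hproj.eventually hp.eventually_hasSum,
    hq.hasFPowerSeriesAt.eventually_hasSum, (continuous_fst.tendsto' _ _ rfl).eventually h0]
    with w hf hfproj hg hfproj0
  simp only [zero_add, projFst_apply] at hf hfproj hg
  rw [hfproj0] at hfproj
  have hdiff := (hasSum_nat_add_iff' 1).mpr (hf.sub hfproj)
  simp only [Finset.sum_range_one, Subsingleton.elim (fun _ : Fin 0 => w) (fun _ => (w.1, 0)),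
    sub_self, sub_zero] at hdiff
  refine hdiff.unique ?_
  convert hg.const_smul w.2 using 2 with m
  rw [p.snd_smul_divSnd_apply_const, projFst_apply]

theorem AnalyticAt.exists_eventuallyEq_snd_pow_smul {f : E × 𝕜 → F} (hf : AnalyticAt 𝕜 f 0)
    (m : ℕ) (h : ∀ᶠ x in 𝓝 0, (m : ℕ∞) ≤ analyticOrderAt (fun t => f (x, t)) 0) :
    ∃ g : E × 𝕜 → F, AnalyticAt 𝕜 g 0 ∧ ∀ᶠ w in 𝓝 0, f w = w.2 ^ m • g w := by
  induction m with
  | zero => exact ⟨f, hf, by simp⟩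
  | succ m ih =>
    obtain ⟨g, hg, hfg⟩ := ih (h.mono fun x hx => le_trans (by simp) hx)
    have hslice : ∀ᶠ x in 𝓝 0, g (x, 0) = 0 := by
      rw [Prod.zero_eq_mk] at hfg hg
      filter_upwards [h, hfg.curry_nhds, hg.eventually_analyticAt.curry_nhds]
        with x hx hfgx hgx
      have hgx0 : AnalyticAt 𝕜 (fun t => g (x, t)) 0 :=
        hgx.self_of_nhds.comp (analyticAt_const.prod analyticAt_id)
      have hsmul : (fun t : 𝕜 => t ^ m • g (x, t)) = ((· - (0 : 𝕜)) ^ m) • fun t => g (x, t) := by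
        ext; simp
      rw [analyticOrderAt_congr hfgx, hsmul, analyticOrderAt_smul (by fun_prop) hgx0,
        analyticOrderAt_centeredMonomial, Nat.cast_succ,
        ENat.add_le_add_iff_left (ENat.natCast_ne_top m)] at hx
      exact apply_eq_zero_of_analyticOrderAt_ne_zero (f := fun t => g (x, t))
        (one_pos.trans_le hx).ne'
    obtain ⟨g', hg', hgg'⟩ := hg.exists_eventuallyEq_snd_smul hslice
    refine ⟨g', hg', ?_⟩
    filter_upwards [hfg, hgg'] with w hfw hgw
    rw [hfw, hgw, smul_smul, pow_succ]

lemma iteratedDeriv_pow_smul_eq_zero [CharZero 𝕜] {g : 𝕜 → F} (hg : AnalyticAt 𝕜 g 0)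
    {i m : ℕ} (hi : i < m) : iteratedDeriv i (fun t => t ^ m • g t) 0 = 0 := by
  have hf : AnalyticAt 𝕜 (fun t => t ^ m • g t) 0 := by fun_prop
  refine (natCast_le_analyticOrderAt_iff_iteratedDeriv_eq_zero hf).mp ?_ i hi
  exact (natCast_le_analyticOrderAt hf).mpr ⟨g, hg, by simp⟩

lemma iteratedDeriv_sum_add_pow_smul [CharZero 𝕜] (c : ℕ → F) {g : 𝕜 → F}
    (hg : AnalyticAt 𝕜 g 0) {i d : ℕ} (hi : i < d) :
    iteratedDeriv i (fun t : 𝕜 => ∑ l ∈ Finset.range d, (t ^ l / l !) • c l + t ^ d • g t) 0 =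
      c i := by
  rw [iteratedDeriv_fun_add (by fun_prop) (by have := hg.contDiffAt (n := i); fun_prop),
    iteratedDeriv_sum_pow_div_factorial_smul c hi, iteratedDeriv_pow_smul_eq_zero hg hi,
    add_zero]

theorem AnalyticAt.exists_eventuallyEq_sum_add_snd_pow_smul [CharZero 𝕜] {f : E × 𝕜 → F}
    (hf : AnalyticAt 𝕜 f 0) {m : ℕ} (c : ℕ → E → F) (hc : ∀ i < m, AnalyticAt 𝕜 (c i) 0)
    (hfc : ∀ i < m, ∀ᶠ x in 𝓝 0, iteratedDeriv i (fun t => f (x, t)) 0 = c i x) :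
    ∃ R : E × 𝕜 → F, AnalyticAt 𝕜 R 0 ∧
      ∀ᶠ w in 𝓝 0, f w = ∑ i ∈ Finset.range m, (w.2 ^ i / i !) • c i w.1 + w.2 ^ m • R w := by
  have hT : AnalyticAt 𝕜
      (fun w : E × 𝕜 => ∑ i ∈ Finset.range m, (w.2 ^ i / i !) • c i w.1) 0 :=
    Finset.analyticAt_fun_sum _ fun i hi =>
      (analyticAt_snd.pow i).div_const.smul
        ((hc i (Finset.mem_range.mp hi)).comp (f := Prod.fst) (x := 0) analyticAt_fst)
  have hfx : ∀ᶠ x in 𝓝 (0 : E), AnalyticAt 𝕜 (fun t => f (x, t)) 0 :=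
    (continuous_id.prodMk continuous_const).tendsto' _ _ rfl |>.eventually
      hf.eventually_analyticAt |>.mono fun x hx => hx.comp (analyticAt_const.prod analyticAt_id)
  have hord : ∀ᶠ x in 𝓝 0, (m : ℕ∞) ≤
      analyticOrderAt (fun t => f (x, t) - ∑ i ∈ Finset.range m, (t ^ i / i !) • c i x) 0 := by
    filter_upwards [hfx, (eventually_all_finite (Set.finite_Iio m)).mpr hfc] with x hfx hfcx
    rw [natCast_le_analyticOrderAt_iff_iteratedDeriv_eq_zero
      (hfx.fun_sub (Finset.analyticAt_fun_sum _ fun i _ => by fun_prop))]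
    intro i hi
    rw [iteratedDeriv_fun_sub hfx.contDiffAt (by fun_prop), hfcx i hi,
      iteratedDeriv_sum_pow_div_factorial_smul _ hi, sub_self]
  obtain ⟨R, hR, hfR⟩ := (hf.sub hT).exists_eventuallyEq_snd_pow_smul m hord
  exact ⟨R, hR, hfR.mono fun w hw => by rw [← hw]; simp⟩

lemma analyticAt_prod_pow {ι : Type*} [Fintype ι] (α : ι → ℕ) (x : ι → 𝕜) :
    AnalyticAt 𝕜 (fun x : ι → 𝕜 => ∏ j, x j ^ α j) x :=
  Finset.analyticAt_fun_prod _ fun j _ =>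
    ((ContinuousLinearMap.proj j : (ι → 𝕜) →L[𝕜] 𝕜).analyticAt x).pow (α j)

end Analytic

lemma prod_pow_mul_eq_pow_prod {M ι : Type*} [CommMonoid M] [Fintype ι] (x : ι → M)
    (α : ι → ℕ) (a : ℕ) : ∏ j, x j ^ (a * α j) = (∏ j, x j ^ α j) ^ a := by
  simp only [mul_comm a, pow_mul, Finset.prod_pow]

lemma exists_yRegular_le {n : ℕ} {G : (Fin n → ℝ) × ℝ → ℝ} {k : ℕ} {x₀ : Fin n → ℝ} {y₀ : ℝ}
    (hk : yDeriv G k x₀ y₀ ≠ 0) : ∃ k' ≤ k, YRegular G k' x₀ y₀ := by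
  classical
  have hex : ∃ j, yDeriv G j x₀ y₀ ≠ 0 := ⟨k, hk⟩
  exact ⟨Nat.find hex, Nat.find_min' hex hk, Nat.find_spec hex,
    fun j hj => not_not.mp (Nat.find_min hex hj)⟩

section BlowUp

variable {n : ℕ} (d : ℕ) (α : Fin n → ℕ) (c : ℕ → (Fin n → ℝ) → ℝ) (R : (Fin n → ℝ) × ℝ → ℝ)

/-- `x^{-αd} G (x, x^α y)` for `G (x, y) = ∑_{i<d} yⁱ / i! · x^{α(d-i)} c i x + y^d R (x, y)`. -/
noncomputable def blowUp (p : (Fin n → ℝ) × ℝ) : ℝ :=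
  ∑ i ∈ Finset.range d, (p.2 ^ i / i !) • c i p.1 + p.2 ^ d • R (p.1, (∏ j, p.1 j ^ α j) * p.2)

variable {d α c R}

lemma analyticAt_blowUp {p : (Fin n → ℝ) × ℝ} (hc : ∀ i < d, AnalyticAt ℝ (c i) p.1)
    (hR : AnalyticAt ℝ R (p.1, (∏ j, p.1 j ^ α j) * p.2)) :
    AnalyticAt ℝ (blowUp d α c R) p := by
  have hΦ : AnalyticAt ℝ (fun p : (Fin n → ℝ) × ℝ => (p.1, (∏ j, p.1 j ^ α j) * p.2)) p :=
    analyticAt_fst.prod (((analyticAt_prod_pow α _).comp analyticAt_fst).mul analyticAt_snd)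
  refine (Finset.analyticAt_fun_sum _ fun i hi => ?_).add
    ((analyticAt_snd.pow d).smul (hR.comp_of_eq hΦ rfl))
  exact (analyticAt_snd.pow i).div_const.smul
    ((hc i (Finset.mem_range.mp hi)).comp analyticAt_fst)

lemma prod_pow_mul_blowUp (p : (Fin n → ℝ) × ℝ) :
    (∏ j, p.1 j ^ (d * α j)) * blowUp d α c R p =
      ∑ i ∈ Finset.range d, (((∏ j, p.1 j ^ α j) * p.2) ^ i / i !) •
          ((∏ j, p.1 j ^ ((d - i) * α j)) * c i p.1) +
        ((∏ j, p.1 j ^ α j) * p.2) ^ d • R (p.1, (∏ j, p.1 j ^ α j) * p.2) := by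
  simp only [blowUp, prod_pow_mul_eq_pow_prod, smul_eq_mul, mul_add, Finset.mul_sum]
  congr 1
  · refine Finset.sum_congr rfl fun i hi => ?_
    rw [← pow_sub_mul_pow _ (Finset.mem_range.mp hi).le]
    ring
  · ring

lemma yDeriv_blowUp_zero (hR : AnalyticAt ℝ R 0) {k : ℕ} (hk : k < d) :
    yDeriv (blowUp d α c R) k 0 0 = c k 0 := by
  have hRt : AnalyticAt ℝ (fun t => R (0, (∏ j, (0 : Fin n → ℝ) j ^ α j) * t)) 0 :=
    hR.comp_of_eq (analyticAt_const.prod (analyticAt_const.mul analyticAt_id)) (by simp)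
  exact iteratedDeriv_sum_add_pow_smul (fun i => c i 0) hRt hk

end BlowUp

theorem lemma_machine2_general
    (n : ℕ) (U : Set ((Fin n → ℝ) × ℝ)) (hU : U ∈ nhds ((0, 0) : (Fin n → ℝ) × ℝ))
    (G : (Fin n → ℝ) × ℝ → ℝ) (hG : AnalyticOnNhd ℝ G U)
    (d : ℕ)
    (α : Fin n → ℕ)
    (cstar : ℕ → (Fin n → ℝ) → ℝ)
    (hcstar : ∀ i < d, ∀ᶠ x in nhds (0 : Fin n → ℝ),
      AnalyticAt ℝ (cstar i) x ∧
        yDeriv G i x 0 = (∏ j, x j ^ ((d - i) * α j)) * cstar i x)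
    (k : ℕ) (hk : k < d) (hk0 : cstar k 0 ≠ 0) :
    ∃ V ∈ nhds ((0, 0) : (Fin n → ℝ) × ℝ), ∃ H : (Fin n → ℝ) × ℝ → ℝ,
      AnalyticOnNhd ℝ H V ∧
      (∀ p ∈ V, (∏ j, p.1 j ^ (d * α j)) * H p = G (p.1, (∏ j, p.1 j ^ α j) * p.2)) ∧
      ∃ k' ≤ k, YRegular H k' 0 0 := by
  obtain ⟨R, hR, hGR⟩ := (hG 0 (mem_of_mem_nhds hU)).exists_eventuallyEq_sum_add_snd_pow_smul
    (fun i x => (∏ j, x j ^ ((d - i) * α j)) * cstar i x)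
    (fun i hi => (analyticAt_prod_pow _ 0).mul (hcstar i hi).self_of_nhds.1)
    (fun i hi => (hcstar i hi).mono fun x hx => hx.2)
  have hΦ : Tendsto (fun p : (Fin n → ℝ) × ℝ => (p.1, (∏ j, p.1 j ^ α j) * p.2)) (𝓝 0) (𝓝 0) :=
    Continuous.tendsto' (by fun_prop) _ _ (by simp)
  have hgood : ∀ᶠ p in 𝓝 ((0, 0) : (Fin n → ℝ) × ℝ), (∀ i < d, AnalyticAt ℝ (cstar i) p.1) ∧
      AnalyticAt ℝ R (p.1, (∏ j, p.1 j ^ α j) * p.2) ∧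
      (∏ j, p.1 j ^ (d * α j)) * blowUp d α cstar R p = G (p.1, (∏ j, p.1 j ^ α j) * p.2) := by
    filter_upwards [continuous_fst.tendsto' _ _ rfl |>.eventually <|
      (eventually_all_finite (Set.finite_Iio d)).mpr hcstar,
      hΦ.eventually hR.eventually_analyticAt, hΦ.eventually hGR] with p hc hRp hGp
    exact ⟨fun i hi => (hc i hi).1, hRp, (prod_pow_mul_blowUp p).trans hGp.symm⟩
  obtain ⟨V, hV, hVgood⟩ := hgood.exists_mem
  refine ⟨V, hV, blowUp d α cstar R, fun p hp => analyticAt_blowUp (hVgood p hp).1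
    (hVgood p hp).2.1, fun p hp => (hVgood p hp).2.2, exists_yRegular_le ?_⟩
  rwa [yDeriv_blowUp_zero hR hk]

/-- Lemma 4.5 (analytic case): with `cᵢ(x) = (∂ⁱG/∂yⁱ)(x,0)`, if each `cᵢ` (`i < d`) is
divisible by `x^{α(d-i)}` with quotient `cᵢ*`, and `c_k*(0) ≠ 0` for some `k < d`, then
`H(x,y) = x^{-αd}·G(x, x^α y)` extends to an analytic function near `(0,0)` which is
`y`-regular of order at most `k` at `(0,0)`. -/
theorem lemma_machine2
    (n : ℕ) (U : Set ((Fin n → ℝ) × ℝ)) (hU : U ∈ nhds ((0, 0) : (Fin n → ℝ) × ℝ))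
    (G : (Fin n → ℝ) × ℝ → ℝ) (hG : AnalyticOnNhd ℝ G U)
    (d : ℕ) (hd : 0 < d) (hreg : YRegular G d 0 0)
    (α : Fin n → ℕ)
    (cstar : ℕ → (Fin n → ℝ) → ℝ)
    (hcstar : ∀ i < d, ∀ᶠ x in nhds (0 : Fin n → ℝ),
      AnalyticAt ℝ (cstar i) x ∧
        yDeriv G i x 0 = (∏ j, x j ^ ((d - i) * α j)) * cstar i x)
    (k : ℕ) (hk : k < d) (hk0 : cstar k 0 ≠ 0) :
    ∃ V ∈ nhds ((0, 0) : (Fin n → ℝ) × ℝ), ∃ H : (Fin n → ℝ) × ℝ → ℝ,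
      AnalyticOnNhd ℝ H V ∧
      (∀ p ∈ V, (∏ j, p.1 j ^ (d * α j)) * H p = G (p.1, (∏ j, p.1 j ^ α j) * p.2)) ∧
      ∃ k' ≤ k, YRegular H k' 0 0 :=
  lemma_machine2_general n U hU G hG d α cstar hcstar k hk hk0
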